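/- Let $R$ be a commutative ring, $x \in R$, and $r \ge 1$ a natural number. Then $T_{-x}\big( t^r \,(1+x t)^{-r} \big) = t^r \,(1-x t)^{-1}$; in particular the result is independent of $r$. (This is the formal content of the paper's complete-intersection example: if $Z$ is the complete intersection of $r$ linearly equivalent effective Cartier divisors of class $D$ in $Y$, then $s(Z,Y)^{\mathscr{O}(-D)} = (1 + D + D^2 + \cdots) \cap [Z]$, independently of $r$; for $r = 1$ this gives $s(D,Y)^{\mathscr{O}(-D)} = D + D^2 + D^3 + \cdots$.) -/

import Mathlib

open PowerSeries Finset

/-!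
Coefficientwise, `T_{-x}` multiplies the degree-`m` part of a series by `(1+xt)^m`: the
coefficients of `tⁿ` in `(1-xt)^{-(k+1)}` and in `(1+xt)^{k+n}` are both `C(k+n, n) xⁿ`. So the
coefficient of `t^m` in `T_{-x}(t^r (1+xt)^{-r})` is that of `t^r (1+xt)^{m-r}`, namely `x^{m-r}`.
Both closed forms come from rescaling `t ↦ λt` the series `(1+t)^N` and `(1-t)^{-(k+1)}`.
-/

/-- The power series `1 + λ t`. -/
noncomputable def oneAdd {R : Type*} [CommRing R] (l : R) : PowerSeries R :=
  1 + PowerSeries.C l * PowerSeries.X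

/-- The inverse power series `(1 + λ t)⁻¹`, via `invOfUnit` (constant coefficient `1`). -/
noncomputable def invOneAdd {R : Type*} [CommRing R] (l : R) : PowerSeries R :=
  PowerSeries.invOfUnit (oneAdd l) 1

/-- The tensor operation `T_λ`, defined coefficientwise:
`T_λ(∑ aᵢ tⁱ) = ∑ aᵢ tⁱ (1+λt)^{-(i+1)}`; the coefficient of `t^m` is the finite sum
`∑_{i=0}^m aᵢ · [t^{m-i}] (1+λt)^{-(i+1)}`. -/
noncomputable def T {R : Type*} [CommRing R] (l : R) (F : PowerSeries R) : PowerSeries R :=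
  PowerSeries.mk fun m => ∑ i ∈ Finset.range (m + 1),
    PowerSeries.coeff i F * PowerSeries.coeff (m - i) (invOneAdd l ^ (i + 1))

section
variable {R : Type*} [CommRing R]

theorem coeff_one_add_X_pow (N n : ℕ) : coeff n ((1 + X : R⟦X⟧) ^ N) = N.choose n := by
  rw [← Polynomial.coe_X, ← Polynomial.coe_one, ← Polynomial.coe_add, ← Polynomial.coe_pow,
    Polynomial.coeff_coe, Polynomial.coeff_one_add_X_pow]

theorem oneAdd_eq_rescale (l : R) : oneAdd l = rescale l (1 + X) := by
  rw [oneAdd, map_add, map_one, rescale_X]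

theorem oneAdd_mul_invOneAdd (l : R) : oneAdd l * invOneAdd l = 1 :=
  mul_invOfUnit _ _ (by simp [oneAdd])

theorem invOneAdd_eq_rescale (l : R) : invOneAdd l = rescale (-l) (mk 1) := by
  have h : oneAdd l = rescale (-l) (1 - X) := by
    rw [oneAdd, map_sub, map_one, rescale_X, map_neg, neg_mul, sub_neg_eq_add]
  refine left_inv_eq_right_inv (a := oneAdd l) ?_ ?_
  · rw [mul_comm, oneAdd_mul_invOneAdd]
  · rw [h, ← map_mul, mul_comm, mk_one_mul_one_sub_eq_one, map_one]

theorem coeff_oneAdd_pow (l : R) (N n : ℕ) :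
    coeff n (oneAdd l ^ N) = l ^ n * N.choose n := by
  rw [oneAdd_eq_rescale, ← map_pow, coeff_rescale, coeff_one_add_X_pow]

theorem coeff_invOneAdd_pow (l : R) (k n : ℕ) :
    coeff n (invOneAdd l ^ (k + 1)) = (-l) ^ n * (k + n).choose k := by
  rw [invOneAdd_eq_rescale, ← map_pow, mk_one_pow_eq_mk_choose_add, coeff_rescale, coeff_mk]

theorem coeff_invOneAdd (l : R) (n : ℕ) : coeff n (invOneAdd l) = (-l) ^ n := by
  rw [invOneAdd_eq_rescale, coeff_rescale, coeff_mk, Pi.one_apply, mul_one]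

theorem coeff_invOneAdd_neg_pow (l : R) (k n : ℕ) :
    coeff n (invOneAdd (-l) ^ (k + 1)) = coeff n (oneAdd l ^ (k + n)) := by
  rw [coeff_invOneAdd_pow, coeff_oneAdd_pow, neg_neg, Nat.choose_symm_add]

theorem invOneAdd_pow_mul_oneAdd_pow_add (l : R) (r d : ℕ) :
    invOneAdd l ^ r * oneAdd l ^ (r + d) = oneAdd l ^ d := by
  rw [pow_add, ← mul_assoc, ← mul_pow, mul_comm (invOneAdd l), oneAdd_mul_invOneAdd, one_pow,
    one_mul]

theorem coeff_T_neg (x : R) (F : R⟦X⟧) (m : ℕ) :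
    coeff m (T (-x) F) = coeff m (F * oneAdd x ^ m) := by
  rw [T, coeff_mk, coeff_mul, Nat.sum_antidiagonal_eq_sum_range_succ_mk]
  refine sum_congr rfl fun i hi => congrArg _ ?_
  rw [coeff_invOneAdd_neg_pow, Nat.add_sub_cancel' (Nat.le_of_lt_succ (mem_range.mp hi))]

end

theorem tensor_segre_complete_intersection_general {R : Type*} [CommRing R] (x : R) (r : ℕ) :
    T (-x) (PowerSeries.X ^ r * invOneAdd x ^ r) =
      PowerSeries.X ^ r * invOneAdd (-x) := by
  ext m
  rw [coeff_T_neg, mul_assoc, coeff_X_pow_mul', coeff_X_pow_mul']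
  split_ifs with h
  · obtain ⟨d, rfl⟩ := Nat.exists_eq_add_of_le h
    rw [invOneAdd_pow_mul_oneAdd_pow_add, Nat.add_sub_cancel_left, coeff_oneAdd_pow,
      coeff_invOneAdd, neg_neg, Nat.choose_self, Nat.cast_one, mul_one]
  · rfl

/-- `T_{-x}(t^r (1+xt)^{-r}) = t^r (1-xt)⁻¹`, independently of `r ≥ 1` (complete
intersection example). -/
theorem tensor_segre_complete_intersection {R : Type*} [CommRing R] (x : R) (r : ℕ)
    (hr : 1 ≤ r) :
    T (-x) (PowerSeries.X ^ r * invOneAdd x ^ r) =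
      PowerSeries.X ^ r * invOneAdd (-x) :=
  tensor_segre_complete_intersection_general x r
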